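/- For every n ≥ 2 there exists a well-rounded lattice L in ℝⁿ possessing a weakly nearly orthogonal basis such that |S(L)| ≥ 4n − 2. -/

import Mathlib

open scoped RealInnerProductSpace
open Submodule Metric MeasureTheory

noncomputable section

abbrev Evec (n : ℕ) := EuclideanSpace ℝ (Fin n)

/-- The lattice generated (over ℤ) by the vectors `b 0, …, b (n-1)`. -/
def latticeOf {n : ℕ} (b : Fin n → Evec n) : Set (Evec n) :=
  {x | ∃ c : Fin n → ℤ, x = ∑ i, (c i : ℝ) • b i}

/-- The set of minimal vectors `S(L)` of a lattice `L`. -/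
def minVecs {n : ℕ} (L : Set (Evec n)) : Set (Evec n) :=
  {x | x ∈ L ∧ x ≠ 0 ∧ ∀ y ∈ L, y ≠ 0 → ‖x‖ ≤ ‖y‖}

/-- `L` is well-rounded: its minimal vectors span `ℝⁿ`. -/
def IsWellRounded {n : ℕ} (L : Set (Evec n)) : Prop :=
  Submodule.span ℝ (minVecs L) = ⊤

/-- `L` has minimal norm `m`. -/
def hasMinNorm {n : ℕ} (L : Set (Evec n)) (m : ℝ) : Prop :=
  (∃ x ∈ L, x ≠ 0 ∧ ‖x‖ = m) ∧ ∀ x ∈ L, x ≠ 0 → m ≤ ‖x‖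

/-- The angle in `[0, π/2]` between a vector `v` and a subspace `V`,
whose cosine is `‖proj_V v‖ / ‖v‖`. -/
def subAngle {n : ℕ} (v : Evec n) (V : Submodule ℝ (Evec n)) : ℝ :=
  Real.arccos (‖(orthogonalProjection V v : Evec n)‖ / ‖v‖)

/-- The ordered basis `b` is weakly θ-orthogonal. -/
def WeaklyOrth {n : ℕ} (θ : ℝ) (b : Fin n → Evec n) : Prop :=
  ∀ i : Fin n, 0 < (i : ℕ) →
    θ ≤ subAngle (b i) (Submodule.span ℝ (b '' {j | j < i}))

/-- The basis `b` is θ-orthogonal: every ordering of it is weakly θ-orthogonal. -/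
def Orth {n : ℕ} (θ : ℝ) (b : Fin n → Evec n) : Prop :=
  ∀ σ : Equiv.Perm (Fin n), WeaklyOrth θ (b ∘ σ)

/-- A nearly orthogonal basis is a π/3-orthogonal basis. -/
def NearlyOrth {n : ℕ} (b : Fin n → Evec n) : Prop := Orth (Real.pi / 3) b

/-- A weakly nearly orthogonal basis is a weakly π/3-orthogonal basis. -/
def WeaklyNearlyOrth {n : ℕ} (b : Fin n → Evec n) : Prop := WeaklyOrth (Real.pi / 3) b

/-- Coherence `C(L)` of a lattice. -/
def coherence {n : ℕ} (L : Set (Evec n)) : ℝ :=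
  sSup {t | ∃ x ∈ minVecs L, ∃ y ∈ minVecs L, x ≠ y ∧ x ≠ -y ∧
    t = abs ⟪x, y⟫ / (‖x‖ * ‖y‖)}

/-- `μ(B)`: minimal absolute cosine of angles between distinct basis vectors. -/
def muB {n : ℕ} (b : Fin n → Evec n) : ℝ :=
  sInf {t | ∃ i j : Fin n, i ≠ j ∧ t = abs ⟪b i, b j⟫ / (‖b i‖ * ‖b j‖)}

/-- `ν(B)`: maximal absolute cosine of angles between distinct basis vectors. -/
def nuB {n : ℕ} (b : Fin n → Evec n) : ℝ :=
  sSup {t | ∃ i j : Fin n, i ≠ j ∧ t = abs ⟪b i, b j⟫ / (‖b i‖ * ‖b j‖)}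

/-- The determinant of the lattice with basis `b`. -/
def latDet {n : ℕ} (b : Fin n → Evec n) : ℝ :=
  |(Matrix.of fun i j : Fin n => b j i).det|

/-- Packing density of a lattice with basis `b` and minimal norm `m`:
`ω_n · m^n / (2^n · det L)`. -/
def packDensity {n : ℕ} (m : ℝ) (b : Fin n → Evec n) : ℝ :=
  (volume (ball (0 : Evec n) 1)).toReal * m ^ n / (2 ^ n * latDet b)

/-- `L` is strongly eutactic. -/
def StronglyEutactic {n : ℕ} (L : Set (Evec n)) : Prop :=
  ∃ c : ℝ, 0 < c ∧ ∀ v : Evec n, ‖v‖ ^ 2 = c * ∑ᶠ x ∈ minVecs L, ⟪v, x⟫ ^ 2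

/-- `L` is perfect: `{x xᵀ : x ∈ S(L)}` spans the symmetric `n × n` matrices. -/
def IsPerfect {n : ℕ} (L : Set (Evec n)) : Prop :=
  ∀ A : Matrix (Fin n) (Fin n) ℝ, A.IsSymm →
    A ∈ Submodule.span ℝ ((fun x : Evec n => Matrix.of fun i j => x i * x j) '' minVecs L)

end

/-!
Take `b₀ = e₀` and `bₖ₊₁ = ½ e₀ + (√3/2) eₖ₊₁`. These are unit vectors whose components
orthogonal to `e₀` are mutually orthogonal, so `bₖ₊₁` makes the angle exactly `π/3` with the span
of `b₀, …, bₖ`. For integer coefficients, `4‖∑ cᵢ bᵢ‖² = (2c₀ + T)² + 3S` with `T = ∑_{i>0} cᵢ`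
and `S = ∑_{i>0} cᵢ²`; as `T ≡ S (mod 2)`, this is at least `4` unless `c = 0`. Hence the minimal
norm is `1`, attained by the `2n - 1` distinct vectors `bᵢ`, `bₖ₊₁ - b₀` and by their negatives,
none of which is among them since the former all have positive coordinate sum.
-/

section Lattice

variable {n : ℕ}

theorem latticeOf_eq_span (b : Fin n → Evec n) : latticeOf b = span ℤ (Set.range b) := by
  ext x
  simp only [latticeOf, Set.mem_ofPred_eq, SetLike.mem_coe, mem_span_range_iff_exists_fun,
    Int.cast_smul_eq_zsmul, eq_comm]

theorem neg_mem_minVecs_latticeOf {b : Fin n → Evec n} {x : Evec n}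
    (hx : x ∈ minVecs (latticeOf b)) : -x ∈ minVecs (latticeOf b) := by
  obtain ⟨hxL, hx0, hmin⟩ := hx
  rw [latticeOf_eq_span] at hxL hmin ⊢
  exact ⟨neg_mem hxL, neg_ne_zero.mpr hx0, fun y hy hy0 => norm_neg x ▸ hmin y hy hy0⟩

theorem finite_minVecs_latticeOf {b : Fin n → Evec n} (hb : LinearIndependent ℝ b) :
    (minVecs (latticeOf b)).Finite := by
  let B := basisOfLinearIndependentOfCardEqFinrank' b hb (by simp)
  rcases (minVecs (latticeOf b)).eq_empty_or_nonempty with h | ⟨x₀, hx₀L, hx₀, -⟩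
  · exact h ▸ Set.finite_empty
  refine (ZSpan.setFinite_inter B (isBounded_closedBall (x := 0) (r := ‖x₀‖))).subset ?_
  rintro x ⟨hxL, hx0, hmin⟩
  refine ⟨mem_closedBall_zero_iff.mpr (hmin x₀ hx₀L hx₀), ?_⟩
  simpa [B, latticeOf_eq_span] using hxL

theorem subAngle_eq_arccos_of_eq_add {V : Submodule ℝ (Evec n)} {v p q : Evec n}
    (hp : p ∈ V) (hq : q ∈ Vᗮ) (hv : v = p + q) :
    subAngle v V = Real.arccos (‖p‖ / ‖v‖) := by
  rw [subAngle, ← starProjection_apply, eq_starProjection_of_mem_orthogonal' hp hq hv]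

theorem four_le_sq_add_three_mul_sum_sq {ι : Type*} [Fintype ι] (a : ℤ) (t : ι → ℤ)
    (h : a ≠ 0 ∨ t ≠ 0) : 4 ≤ (2 * a + ∑ k, t k) ^ 2 + 3 * ∑ k, t k ^ 2 := by
  have hS : 0 ≤ ∑ k, t k ^ 2 := Finset.sum_nonneg fun k _ => sq_nonneg (t k)
  have hpar : Even (∑ k, t k ^ 2 - ∑ k, t k) := by
    rw [← Finset.sum_sub_distrib]
    exact Finset.even_sum _ fun k _ => by
      simpa [sq, ← mul_sub_one] using Int.even_mul_pred_self (t k)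
  rcases (by omega : ∑ k, t k ^ 2 = 0 ∨ ∑ k, t k ^ 2 = 1 ∨ 2 ≤ ∑ k, t k ^ 2) with h0 | h1 | h2
  · have ht : t = 0 := funext fun k => by
      simpa using (Finset.sum_eq_zero_iff_of_nonneg fun k _ => sq_nonneg (t k)).mp h0 k
        (Finset.mem_univ k)
    have ha : a ≠ 0 := h.resolve_right (not_not.mpr ht)
    have : 1 ≤ a ^ 2 := by nlinarith [Int.one_le_abs ha, sq_abs a]
    rw [h0, ht]
    simp only [Pi.zero_apply, Finset.sum_const_zero, add_zero]
    nlinarith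
  · have hodd : 2 * a + ∑ k, t k ≠ 0 := by
      rw [h1] at hpar
      obtain ⟨r, hr⟩ := hpar
      omega
    nlinarith [Int.one_le_abs hodd, sq_abs (2 * a + ∑ k, t k)]
  · nlinarith [sq_nonneg (2 * a + ∑ k, t k)]

theorem two_mul_ncard_le_ncard_minVecs_latticeOf {b : Fin n → Evec n}
    (hb : LinearIndependent ℝ b) {P : Set (Evec n)} (hP : P ⊆ minVecs (latticeOf b))
    (hdisj : Disjoint P (-P)) : 2 * P.ncard ≤ (minVecs (latticeOf b)).ncard := by
  have hnegP : -P ⊆ minVecs (latticeOf b) := fun x hx =>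
    neg_neg x ▸ neg_mem_minVecs_latticeOf (hP hx)
  have hfin := finite_minVecs_latticeOf hb
  calc 2 * P.ncard = P.ncard + (-P).ncard := by rw [Set.ncard_neg]; ring
    _ = (P ∪ -P).ncard := (Set.ncard_union_eq hdisj (hfin.subset hP) (hfin.subset hnegP)).symm
    _ ≤ _ := Set.ncard_le_ncard (Set.union_subset hP hnegP) hfin

theorem norm_single_add_single {i j : Fin n} (hij : i ≠ j) (a b : ℝ) :
    ‖EuclideanSpace.single i a + EuclideanSpace.single j b‖ = √(a ^ 2 + b ^ 2) := by
  have horth : ⟪EuclideanSpace.single i a, EuclideanSpace.single j b⟫ = 0 := by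
    simp [EuclideanSpace.inner_single_left, hij]
  rw [← Real.sqrt_sq (norm_nonneg _), norm_add_sq_real, horth]
  simp

theorem sum_apply_single_add_single (i j : Fin n) (a b : ℝ) :
    ∑ k, (EuclideanSpace.single i a + EuclideanSpace.single j b) k = a + b := by
  simp [Finset.sum_add_distrib, PiLp.single_apply]

end Lattice

section HexBasis

open EuclideanSpace

variable {m : ℕ}

noncomputable def hexBasis : Fin (m + 1) → Evec (m + 1) :=
  Fin.cases (single 0 1) fun k => single 0 (1 / 2) + single k.succ (√3 / 2)

@[simp]
theorem hexBasis_zero : hexBasis 0 = (single 0 1 : Evec (m + 1)) := rfl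

@[simp]
theorem hexBasis_succ (k : Fin m) :
    hexBasis k.succ = single 0 (1 / 2) + single k.succ (√3 / 2) := rfl

theorem hexBasis_succ_sub_zero (k : Fin m) :
    hexBasis k.succ - hexBasis 0 = single 0 (-1 / 2) + single k.succ (√3 / 2) := by
  ext j
  by_cases hj : j = 0 <;> norm_num [hj, (Fin.succ_ne_zero k).symm]

theorem sum_smul_hexBasis_apply_zero (c : Fin (m + 1) → ℝ) :
    (∑ i, c i • hexBasis i) 0 = c 0 + (∑ k : Fin m, c k.succ) / 2 := by
  simp [Fin.sum_univ_succ, (Fin.succ_ne_zero _).symm, div_eq_mul_inv, Finset.sum_mul]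

theorem sum_smul_hexBasis_apply_succ (c : Fin (m + 1) → ℝ) (k : Fin m) :
    (∑ i, c i • hexBasis i) k.succ = √3 / 2 * c k.succ := by
  simp [Fin.sum_univ_succ, Pi.single_apply, mul_comm]

theorem four_mul_norm_sq_sum_smul_hexBasis (c : Fin (m + 1) → ℝ) :
    4 * ‖∑ i, c i • hexBasis i‖ ^ 2 =
      (2 * c 0 + ∑ k : Fin m, c k.succ) ^ 2 + 3 * ∑ k : Fin m, c k.succ ^ 2 := by
  rw [EuclideanSpace.real_norm_sq_eq, Fin.sum_univ_succ, sum_smul_hexBasis_apply_zero]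
  simp only [sum_smul_hexBasis_apply_succ, mul_pow, div_pow, Real.sq_sqrt zero_le_three,
    ← Finset.mul_sum]
  ring

theorem one_le_norm_of_mem_latticeOf_hexBasis {x : Evec (m + 1)}
    (hx : x ∈ latticeOf hexBasis) (hx0 : x ≠ 0) : 1 ≤ ‖x‖ := by
  obtain ⟨c, rfl⟩ := hx
  have hc : c 0 ≠ 0 ∨ (fun k : Fin m => c k.succ) ≠ 0 := by
    by_contra! h
    refine hx0 (Finset.sum_eq_zero fun i _ => ?_)
    induction i using Fin.cases with
    | zero => simp [h.1]
    | succ k => simp [congrFun h.2 k]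
  have h4 : (4 : ℝ) ≤ 4 * ‖∑ i, (c i : ℝ) • hexBasis i‖ ^ 2 := by
    rw [four_mul_norm_sq_sum_smul_hexBasis]
    exact_mod_cast four_le_sq_add_three_mul_sum_sq _ _ hc
  nlinarith [norm_nonneg (∑ i, (c i : ℝ) • hexBasis i)]

theorem mem_minVecs_latticeOf_hexBasis {x : Evec (m + 1)}
    (hx : x ∈ span ℤ (Set.range hexBasis)) (h1 : ‖x‖ = 1) :
    x ∈ minVecs (latticeOf hexBasis) := by
  rw [← SetLike.mem_coe, ← latticeOf_eq_span] at hx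
  refine ⟨hx, norm_ne_zero_iff.mp (h1.trans_ne one_ne_zero), fun y hy hy0 => ?_⟩
  exact h1 ▸ one_le_norm_of_mem_latticeOf_hexBasis hy hy0

theorem norm_hexBasis (i : Fin (m + 1)) : ‖hexBasis i‖ = 1 := by
  induction i using Fin.cases with
  | zero => simp
  | succ k =>
    rw [hexBasis_succ, norm_single_add_single (Fin.succ_ne_zero k).symm]
    norm_num [div_pow]

theorem norm_hexBasis_succ_sub_zero (k : Fin m) : ‖hexBasis k.succ - hexBasis 0‖ = 1 := by
  rw [hexBasis_succ_sub_zero, norm_single_add_single (Fin.succ_ne_zero k).symm]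
  norm_num [div_pow]

theorem span_range_hexBasis : span ℝ (Set.range (hexBasis (m := m))) = ⊤ := by
  have hsingle : ∀ j, (single j 1 : Evec (m + 1)) ∈ span ℝ (Set.range hexBasis) := by
    intro j
    induction j using Fin.cases with
    | zero => exact subset_span ⟨0, rfl⟩
    | succ k =>
      have : single k.succ 1 = (2 / √3) • (hexBasis k.succ - (1 / 2 : ℝ) • hexBasis 0) := by
        ext j
        by_cases hj : j = k.succ <;> by_cases hj0 : j = 0 <;> simp [hj, hj0]
      rw [this]
      exact smul_mem _ _ (sub_mem (subset_span ⟨_, rfl⟩) (smul_mem _ _ (subset_span ⟨_, rfl⟩)))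
  rw [eq_top_iff, ← (EuclideanSpace.basisFun (Fin (m + 1)) ℝ).toBasis.span_eq, span_le]
  rintro _ ⟨j, rfl⟩
  simpa using hsingle j

theorem linearIndependent_hexBasis : LinearIndependent ℝ (hexBasis (m := m)) :=
  linearIndependent_of_top_le_span_of_card_eq_finrank span_range_hexBasis.ge (by simp)

theorem isWellRounded_latticeOf_hexBasis : IsWellRounded (latticeOf (hexBasis (m := m))) := by
  rw [IsWellRounded, eq_top_iff, ← span_range_hexBasis]
  refine span_mono ?_
  rintro _ ⟨i, rfl⟩
  exact mem_minVecs_latticeOf_hexBasis (subset_span ⟨i, rfl⟩) (norm_hexBasis i)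

theorem hexBasis_apply_succ_of_ne {j : Fin (m + 1)} {k : Fin m} (h : j ≠ k.succ) :
    hexBasis j k.succ = 0 := by
  induction j using Fin.cases with
  | zero => simp [Fin.succ_ne_zero]
  | succ l => simp [Fin.succ_ne_zero, Ne.symm h]

theorem weaklyNearlyOrth_hexBasis : WeaklyNearlyOrth (hexBasis (m := m)) := by
  intro i hi
  obtain ⟨k, rfl⟩ := Fin.exists_succ_eq.mpr (Fin.pos_iff_ne_zero.mp hi)
  have hp : (single 0 (1 / 2) : Evec (m + 1)) ∈ span ℝ (hexBasis '' {j | j < k.succ}) := by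
    have : (single 0 (1 / 2) : Evec (m + 1)) = (1 / 2 : ℝ) • hexBasis 0 := by
      ext j
      by_cases hj : j = 0 <;> simp [hj]
    exact this ▸ smul_mem _ _ (subset_span ⟨0, Fin.succ_pos k, rfl⟩)
  have hq : (single k.succ (√3 / 2) : Evec (m + 1)) ∈ (span ℝ (hexBasis '' {j | j < k.succ}))ᗮ := by
    refine (isOrtho_span.mpr ?_).ge (subset_span rfl)
    rintro _ ⟨j, hj, rfl⟩ _ rfl
    simp [EuclideanSpace.inner_single_right, hexBasis_apply_succ_of_ne (Fin.ne_of_lt hj)]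
  rw [subAngle_eq_arccos_of_eq_add hp hq (hexBasis_succ k), norm_hexBasis, div_one]
  simp only [PiLp.norm_single, norm_div, norm_one, Real.norm_ofNat]
  rw [← Real.cos_pi_div_three, Real.arccos_cos (by positivity) (by linarith [Real.pi_pos])]

def hexMinVecs : Set (Evec (m + 1)) :=
  Set.range hexBasis ∪ Set.range fun k : Fin m => hexBasis k.succ - hexBasis 0

theorem hexMinVecs_subset_minVecs : hexMinVecs (m := m) ⊆ minVecs (latticeOf hexBasis) := by
  rintro _ (⟨i, rfl⟩ | ⟨k, rfl⟩)
  · exact mem_minVecs_latticeOf_hexBasis (subset_span ⟨i, rfl⟩) (norm_hexBasis i)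
  · exact mem_minVecs_latticeOf_hexBasis (sub_mem (subset_span ⟨_, rfl⟩) (subset_span ⟨_, rfl⟩))
      (norm_hexBasis_succ_sub_zero k)

theorem ncard_hexMinVecs : (hexMinVecs (m := m)).ncard = 2 * m + 1 := by
  have hinj := linearIndependent_hexBasis (m := m).injective
  have hdisj : Disjoint (Set.range (hexBasis (m := m)))
      (Set.range fun k : Fin m => hexBasis k.succ - hexBasis 0) := by
    rw [Set.disjoint_left]
    rintro _ ⟨i, rfl⟩ ⟨k, hk⟩
    have h0 := congrArg (· 0) hk
    cases i using Fin.cases <;> norm_num at h0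
  have hinj' : Function.Injective fun k : Fin m => hexBasis k.succ - hexBasis 0 :=
    fun k l h => Fin.succ_injective _ (hinj (sub_left_injective h))
  rw [hexMinVecs, Set.ncard_union_eq hdisj, Set.ncard_range_of_injective hinj,
    Set.ncard_range_of_injective hinj']
  simp only [Nat.card_eq_fintype_card, Fintype.card_fin]
  ring

theorem disjoint_hexMinVecs_neg : Disjoint (hexMinVecs (m := m)) (-hexMinVecs) := by
  have hpos : ∀ x ∈ hexMinVecs (m := m), 0 < ∑ j, x j := by
    rintro _ (⟨i, rfl⟩ | ⟨k, rfl⟩)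
    · induction i using Fin.cases with
      | zero => simp
      | succ l =>
        rw [hexBasis_succ, sum_apply_single_add_single]
        positivity
    · have h3 : 1 < √3 := by rw [Real.lt_sqrt zero_le_one]; norm_num
      change 0 < ∑ j, (hexBasis k.succ - hexBasis 0 : Evec (m + 1)) j
      rw [hexBasis_succ_sub_zero, sum_apply_single_add_single]
      linarith
  rw [Set.disjoint_left]
  intro x hx hx'
  have := hpos _ hx'
  simp only [PiLp.neg_apply, Finset.sum_neg_distrib, neg_pos] at this
  exact (hpos x hx).not_gt this

end HexBasis

theorem stmt_10_general (n : ℕ) :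
    ∃ b : Fin n → Evec n, LinearIndependent ℝ b ∧ WeaklyNearlyOrth b ∧
      IsWellRounded (latticeOf b) ∧ 4 * n - 2 ≤ (minVecs (latticeOf b)).ncard := by
  rcases n with _ | m
  · exact ⟨Fin.elim0, linearIndependent_empty_type, fun i => i.elim0, Subsingleton.elim _ _,
      by simp⟩
  refine ⟨hexBasis, linearIndependent_hexBasis, weaklyNearlyOrth_hexBasis,
    isWellRounded_latticeOf_hexBasis, ?_⟩
  calc 4 * (m + 1) - 2 = 2 * hexMinVecs.ncard := by rw [ncard_hexMinVecs]; omega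
    _ ≤ _ := two_mul_ncard_le_ncard_minVecs_latticeOf linearIndependent_hexBasis
      hexMinVecs_subset_minVecs disjoint_hexMinVecs_neg

/-- for every `n ≥ 2` there is a well-rounded lattice with a weakly
nearly orthogonal basis and at least `4n - 2` minimal vectors. -/
theorem stmt_10 (n : ℕ) (hn : 2 ≤ n) :
    ∃ b : Fin n → Evec n, LinearIndependent ℝ b ∧ WeaklyNearlyOrth b ∧
      IsWellRounded (latticeOf b) ∧ 4 * n - 2 ≤ (minVecs (latticeOf b)).ncard :=
  stmt_10_general n
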